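/- With Φ and F as defined, for fixed y with 0 < y ≤ 1, the limit as x → ∞ of (log x − Φ(x,y)/y) equals ((1−y)/y)·log(1−y) + 1, where for y = 1 the term ((1−y)/y)·log(1−y) is interpreted as its limit 0. -/

import Mathlib

/-!
Writing `G = √((1-y)²x² + 2(1+y)x + 1)`, one has `F = 2(1 + (1+y)x) - 2G`, so the two arguments
`A = 1 + x - F/4` and `B = 1 + xy - F/4` of the logarithms in `Φ` are at least `1/2` and satisfy
`AB = 1 + (1+y)x - F/4`. Hence
`log x - Φ/y = ((1-y)/y) log (A/x) - log (AB/x) / y + F/(4xy)`,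
and `G/x → 1 - y` gives `F/x → 4y`, so `A/x → 1 - y`, `AB/x → 1` and `F/(4xy) → 1`.
For `y = 1` the first term vanishes identically, so that case needs no separate argument.
-/

open Filter

noncomputable def F (x y : ℝ) : ℝ :=
  (Real.sqrt (x * (1 + Real.sqrt y) ^ 2 + 1) -
    Real.sqrt (x * (1 - Real.sqrt y) ^ 2 + 1)) ^ 2

noncomputable def Phi (x y : ℝ) : ℝ :=
  y * Real.log (1 + x - F x y / 4) + Real.log (1 + x * y - F x y / 4) -
    F x y / (4 * x)

open Topology

/-- `G x y` is `√(x(1+√y)²+1) · √(x(1-√y)²+1)`, written without `√y`. -/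
noncomputable def G (x y : ℝ) : ℝ := √(((1 - y) * x) ^ 2 + 2 * (1 + y) * x + 1)

section ClosedForm

variable {x y : ℝ}

lemma G_sq (hx : 0 ≤ x) (hy : 0 ≤ y) : G x y ^ 2 = ((1 - y) * x) ^ 2 + 2 * (1 + y) * x + 1 :=
  Real.sq_sqrt (by positivity)

lemma abs_le_G (hx : 0 ≤ x) (hy : 0 ≤ y) : |(1 - y) * x| ≤ G x y :=
  Real.abs_le_sqrt (by nlinarith)

lemma F_eq_sub_G (hx : 0 ≤ x) (hy : 0 ≤ y) : F x y = 2 * (1 + (1 + y) * x) - 2 * G x y := by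
  obtain ⟨s, hs, rfl⟩ : ∃ s, 0 ≤ s ∧ y = s ^ 2 := ⟨√y, Real.sqrt_nonneg y, (Real.sq_sqrt hy).symm⟩
  have ha : 0 ≤ x * (1 + s) ^ 2 + 1 := by positivity
  have hb : 0 ≤ x * (1 - s) ^ 2 + 1 := by positivity
  have hG : √(x * (1 + s) ^ 2 + 1) * √(x * (1 - s) ^ 2 + 1) = G x (s ^ 2) := by
    rw [← Real.sqrt_mul ha, G]
    ring_nf
  rw [F, Real.sqrt_sq hs, sub_sq, Real.sq_sqrt ha, Real.sq_sqrt hb, mul_assoc, hG]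
  ring

lemma one_add_sub_F_pos (hx : 0 ≤ x) (hy : 0 ≤ y) : 0 < 1 + x - F x y / 4 := by
  rw [F_eq_sub_G hx hy]
  linarith [neg_abs_le ((1 - y) * x), abs_le_G hx hy]

lemma one_add_mul_sub_F_pos (hx : 0 ≤ x) (hy : 0 ≤ y) : 0 < 1 + x * y - F x y / 4 := by
  rw [F_eq_sub_G hx hy]
  linarith [le_abs_self ((1 - y) * x), abs_le_G hx hy]

lemma mul_one_add_sub_F (hx : 0 ≤ x) (hy : 0 ≤ y) :
    (1 + x - F x y / 4) * (1 + x * y - F x y / 4) = 1 + (1 + y) * x - F x y / 4 := by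
  rw [F_eq_sub_G hx hy]
  linear_combination (1 / 4 : ℝ) * G_sq hx hy

lemma log_sub_Phi_div_eq (hx : 0 < x) (hy : 0 < y) :
    Real.log x - Phi x y / y =
      (1 - y) / y * Real.log ((1 + x - F x y / 4) / x)
        - Real.log ((1 + (1 + y) * x - F x y / 4) / x) / y + F x y / (4 * x) / y := by
  have hA := one_add_sub_F_pos hx.le hy.le
  have hB := one_add_mul_sub_F_pos hx.le hy.le
  rw [Phi, ← mul_one_add_sub_F hx.le hy.le, Real.log_div hA.ne' hx.ne',
    Real.log_div (mul_pos hA hB).ne' hx.ne', Real.log_mul hA.ne' hB.ne']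
  field_simp
  ring

end ClosedForm

section Asymptotics

lemma tendsto_G_div (y : ℝ) : Tendsto (fun x => G x y / x) atTop (𝓝 |1 - y|) := by
  have h : Tendsto (fun x : ℝ => √((1 - y) ^ 2 + 2 * (1 + y) * x⁻¹ + x⁻¹ ^ 2)) atTop
      (𝓝 √((1 - y) ^ 2 + 2 * (1 + y) * 0 + 0 ^ 2)) :=
    ((tendsto_const_nhds.add (tendsto_inv_atTop_zero.const_mul _)).add
      (tendsto_inv_atTop_zero.pow 2)).sqrt
  rw [mul_zero, add_zero, zero_pow two_ne_zero, add_zero, Real.sqrt_sq_eq_abs] at h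
  refine h.congr' ?_
  filter_upwards [eventually_gt_atTop 0] with x hx
  conv_rhs => arg 2; rw [← Real.sqrt_sq hx.le]
  rw [G, ← Real.sqrt_div' _ (sq_nonneg x)]
  congr 1
  field_simp

variable {y : ℝ}

lemma tendsto_F_div (hy0 : 0 ≤ y) (hy1 : y ≤ 1) :
    Tendsto (fun x => F x y / x) atTop (𝓝 (4 * y)) := by
  have h : Tendsto (fun x => 2 * x⁻¹ + 2 * (1 + y) - 2 * (G x y / x)) atTop
      (𝓝 (2 * 0 + 2 * (1 + y) - 2 * |1 - y|)) :=
    ((tendsto_inv_atTop_zero.const_mul 2).add_const _).sub ((tendsto_G_div y).const_mul 2)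
  rw [abs_of_nonneg (sub_nonneg.mpr hy1)] at h
  convert h.congr' _ using 2
  · ring
  filter_upwards [eventually_gt_atTop 0] with x hx
  rw [F_eq_sub_G hx.le hy0]
  field_simp

lemma tendsto_affine_sub_F_div (c a : ℝ) (hy0 : 0 ≤ y) (hy1 : y ≤ 1) :
    Tendsto (fun x => (c + a * x - F x y / 4) / x) atTop (𝓝 (a - y)) := by
  have h : Tendsto (fun x => c * x⁻¹ + a - F x y / x / 4) atTop (𝓝 (c * 0 + a - 4 * y / 4)) :=
    ((tendsto_inv_atTop_zero.const_mul c).add_const a).sub ((tendsto_F_div hy0 hy1).div_const 4)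
  convert h.congr' _ using 2
  · ring
  filter_upwards [eventually_gt_atTop 0] with x hx
  field_simp

end Asymptotics

theorem Phi_high_power_limit (y : ℝ) (hy0 : 0 < y) (hy1 : y ≤ 1) :
    Tendsto (fun x : ℝ => Real.log x - Phi x y / y) atTop
      (nhds ((1 - y) / y * Real.log (1 - y) + 1)) := by
  have hA : Tendsto (fun x => (1 - y) / y * Real.log ((1 + x - F x y / 4) / x)) atTop
      (𝓝 ((1 - y) / y * Real.log (1 - y))) := by
    rcases hy1.lt_or_eq with hy | rfl
    · have h := tendsto_affine_sub_F_div 1 1 hy0.le hy1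
      simp only [one_mul] at h
      exact (h.log (sub_ne_zero.mpr hy.ne')).const_mul _
    · simp
  have hAB : Tendsto (fun x => Real.log ((1 + (1 + y) * x - F x y / 4) / x) / y) atTop (𝓝 0) := by
    have h := tendsto_affine_sub_F_div 1 (1 + y) hy0.le hy1
    rw [add_sub_cancel_right] at h
    simpa using (h.log one_ne_zero).div_const y
  have hF : Tendsto (fun x => F x y / (4 * x) / y) atTop (𝓝 1) := by
    convert ((tendsto_F_div hy0.le hy1).div_const 4).div_const y using 1
    · ext x
      ring
    · field_simp
  have h := (hA.sub hAB).add hF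
  rw [sub_zero] at h
  refine h.congr' ?_
  filter_upwards [eventually_gt_atTop 0] with x hx
  exact (log_sub_Phi_div_eq hx hy0).symm
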